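/- If A is a G-homological Z_n-set in a topological space X and F ⊆ A is closed in X, then F is a G-homological Z_n-set in X. -/

import Mathlib

open CategoryTheory CategoryTheory.Limits AlgebraicTopology

/-- The functor sending a type `S` to the free `G`-coefficient group `S →₀ G`. -/
noncomputable def coeffFunctor (G : Type) [AddCommGroup G] : Type ⥤ AddCommGrpCat where
  obj S := AddCommGrpCat.of (S →₀ G)
  map f := AddCommGrpCat.ofHom (Finsupp.mapDomain.addMonoidHom f)
  map_id S := AddCommGrpCat.ext fun x => Finsupp.mapDomain_id
  map_comp f g := by
    refine AddCommGrpCat.ext fun x => ?_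
    exact Finsupp.mapDomain_comp (v := x) (f := ⇑(ConcreteCategory.hom f))
      (g := ⇑(ConcreteCategory.hom g))

/-- The singular chain complex of `X` with coefficients in `G`. -/
noncomputable def singularChains (G : Type) [AddCommGroup G] (X : Type) [TopologicalSpace X] :
    ChainComplex AddCommGrpCat ℕ :=
  (alternatingFaceMapComplex AddCommGrpCat).obj
    (TopCat.toSSet.obj (TopCat.of X) ⋙ coeffFunctor G)

/-- The chain map induced by a continuous map. -/
noncomputable def singularChainsMap (G : Type) [AddCommGroup G] {X Y : Type}
    [TopologicalSpace X] [TopologicalSpace Y] (f : C(X, Y)) :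
    singularChains G X ⟶ singularChains G Y :=
  (alternatingFaceMapComplex AddCommGrpCat).map
    (Functor.whiskerRight (TopCat.toSSet.map (TopCat.ofHom f : TopCat.of X ⟶ TopCat.of Y)) (coeffFunctor G))

lemma singularChainsMap_comp (G : Type) [AddCommGroup G] {X Y Z : Type}
    [TopologicalSpace X] [TopologicalSpace Y] [TopologicalSpace Z] (f : C(X, Y)) (g : C(Y, Z)) :
    singularChainsMap G (g.comp f) = singularChainsMap G f ≫ singularChainsMap G g := by
  first
    | (simp only [singularChainsMap, ← Functor.map_comp, ← Functor.whiskerRight_comp]; rfl)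
    | (unfold singularChainsMap
       erw [← Functor.map_comp, ← Functor.whiskerRight_comp, ← Functor.map_comp]
       rfl)

/-- Relative singular homology `H_k(U, U \ A; G)` of the pair of subspaces `(U, U \ A)` of `X`,
defined as the homology of the cokernel of the chain map induced by the inclusion
`U \ A ⊆ U`. -/
noncomputable def relHomology (G : Type) [AddCommGroup G] {X : Type} [TopologicalSpace X]
    (U A : Set X) (k : ℕ) : AddCommGrpCat :=
  (cokernel (singularChainsMap G
    (⟨Set.inclusion (Set.diff_subset : U \ A ⊆ U), continuous_inclusion _⟩ :
      C(↥(U \ A), ↥U)))).homology k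

/-- `A` is a `G`-homological `Z_n`-set in `X` : it is closed and `H_k(U, U \ A; G) = 0`
for all open `U ⊆ X` and all `k ≤ n`. -/
def IsHomologicalZSet (G : Type) [AddCommGroup G] {X : Type} [TopologicalSpace X]
    (n : ℕ) (A : Set X) : Prop :=
  IsClosed A ∧ ∀ U : Set X, IsOpen U → ∀ k : ℕ, k ≤ n → Subsingleton (relHomology G U A k)

/-!
For `F ⊆ A` and `U` open, the triple `U \ A ⊆ U \ F ⊆ U` has the exact segment
`H_k(U, U \ A) ⟶ H_k(U, U \ F) ⟶ H_{k-1}(U \ F, U \ A)`. Since `U \ F` is open and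
`(U \ F) \ A = U \ A`, both outer groups vanish for `k ≤ n` because `A` is a `Z_n`-set.
The exact segment comes from the short exact sequence of chain complexes
`coker f ⟶ coker (f ≫ g) ⟶ coker g` for composable chain maps `f`, `g` with `g` mono.
-/

section Abelian

variable {C : Type*} [Category C] [Abelian C]

lemma cokernelCompSequence_shortExact {X Y Z : C} (f : X ⟶ Y) (g : Y ⟶ Z) [Mono g] :
    (ShortComplex.mk (cokernel.map f (f ≫ g) (𝟙 X) g (by simp))
      (cokernel.map (f ≫ g) g f (𝟙 Z) (by simp)) (by ext; simp)).ShortExact := by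
  have hexact := kernelCokernelCompSequence_exact f g
  have hδ : kernelCokernelCompSequence.δ f g = 0 := by
    simp [kernelCokernelCompSequence.δ_fac, kernel.ι_of_mono]
  exact { exact := hexact.exact 3, mono_f := (hexact.exact 2).mono_g hδ,
          epi_g := inferInstanceAs (Epi ((kernelCokernelCompSequence f g).map' 4 5)) }

lemma CategoryTheory.ShortComplex.ShortExact.isZero_homology_X₃ {ι : Type*} {c : ComplexShape ι}
    {S : ShortComplex (HomologicalComplex C c)} (hS : S.ShortExact) (i : ι)
    (h₂ : IsZero (S.X₂.homology i)) (h₁ : ∀ j, c.Rel i j → IsZero (S.X₁.homology j)) :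
    IsZero (S.X₃.homology i) := by
  by_cases! hi : ∃ j, c.Rel i j
  · obtain ⟨j, hij⟩ := hi
    exact (hS.homology_exact₃ i j hij).isZero_X₂ (h₂.eq_of_src _ _) ((h₁ j hij).eq_of_tgt _ _)
  · have := hS.epi_g
    have := HomologicalComplex.epi_homologyMap_of_epi_of_not_rel S.g i hi
    rw [IsZero.iff_id_eq_zero, ← cancel_epi (HomologicalComplex.homologyMap S.g i)]
    exact h₂.eq_of_src _ _

end Abelian

lemma TopCat.toSSet_map_app_injective {X Y : TopCat} (f : X ⟶ Y) (hf : Function.Injective f)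
    (n : SimplexCategoryᵒᵖ) : Function.Injective ((TopCat.toSSet.map f).app n) := by
  intro σ τ h
  exact ULift.ext _ _ (ConcreteCategory.hom_ext _ _ fun x =>
    hf (ConcreteCategory.congr_hom (congrArg ULift.down h) x))

lemma mono_coeffFunctor_map (G : Type) [AddCommGroup G] {S T : Type} (h : S ⟶ T)
    (hh : Function.Injective h) : Mono ((coeffFunctor G).map h) :=
  (AddCommGrpCat.mono_iff_injective _).mpr (Finsupp.mapDomain_injective hh)

lemma mono_singularChainsMap (G : Type) [AddCommGroup G] {X Y : Type}
    [TopologicalSpace X] [TopologicalSpace Y] (f : C(X, Y)) (hf : Function.Injective f) :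
    Mono (singularChainsMap G f) :=
  HomologicalComplex.mono_of_mono_f _ fun _ =>
    mono_coeffFunctor_map G _ (TopCat.toSSet_map_app_injective (TopCat.ofHom f) hf _)

section PairHomology

variable (G : Type) [AddCommGroup G] {X : Type} [TopologicalSpace X]

noncomputable def pairHomology {V U : Set X} (h : V ⊆ U) (k : ℕ) : AddCommGrpCat :=
  (cokernel (singularChainsMap G (ContinuousMap.inclusion h))).homology k

lemma pairHomology_congr {V V' U : Set X} (e : V = V') (h : V ⊆ U) (h' : V' ⊆ U) (k : ℕ) :
    pairHomology G h k = pairHomology G h' k := by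
  subst e; rfl

lemma relHomology_diff_eq_pairHomology {U A F : Set X} (hFA : F ⊆ A) (k : ℕ) :
    relHomology G (U \ F) A k =
      pairHomology G (Set.sdiff_subset_sdiff_right hFA : U \ A ⊆ U \ F) k :=
  pairHomology_congr G (by rw [Set.sdiff_sdiff, Set.union_eq_right.mpr hFA]) Set.sdiff_subset _ k

lemma isZero_pairHomology_of_triple {V W U : Set X} (hVW : V ⊆ W) (hWU : W ⊆ U) (k : ℕ)
    (hUV : IsZero (pairHomology G (hVW.trans hWU) k))
    (hWV : ∀ j, j + 1 = k → IsZero (pairHomology G hVW j)) :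
    IsZero (pairHomology G hWU k) := by
  have hUV' : IsZero ((cokernel (singularChainsMap G (ContinuousMap.inclusion hVW) ≫
      singularChainsMap G (ContinuousMap.inclusion hWU))).homology k) := by
    rwa [← singularChainsMap_comp]
  have := mono_singularChainsMap G (ContinuousMap.inclusion hWU) (Set.inclusion_injective hWU)
  exact (cokernelCompSequence_shortExact _ _).isZero_homology_X₃ k hUV' hWV

end PairHomology

/-- A closed subset of a `G`-homological `Z_n`-set is a `G`-homological `Z_n`-set. -/
theorem stmt5 (G : Type) [AddCommGroup G] {X : Type} [TopologicalSpace X] (n : ℕ)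
    (A F : Set X) (hA : IsHomologicalZSet G n A) (hF : IsClosed F) (hFA : F ⊆ A) :
    IsHomologicalZSet G n F := by
  refine ⟨hF, fun U hU k hk => AddCommGrpCat.isZero_iff_subsingleton.mp ?_⟩
  refine isZero_pairHomology_of_triple G (Set.sdiff_subset_sdiff_right hFA) Set.sdiff_subset k
    (AddCommGrpCat.isZero_iff_subsingleton.mpr (hA.2 U hU k hk)) fun j hj => ?_
  rw [← relHomology_diff_eq_pairHomology G hFA, AddCommGrpCat.isZero_iff_subsingleton]
  exact hA.2 (U \ F) (hU.sdiff hF) j (by omega)
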